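/- arXiv:2602.12736 — 4 statements merged into one kernel-verified Lean document; each statement's English description precedes it below -/
import Mathlib

section
/- Any edge-colouring of K₅ minus an edge (the complete graph on 5 vertices with one edge removed) that uses at least two colours contains a triangle whose edges are not all the same colour. -/
open SimpleGraph

/-- Fact 3.4: any edge-colouring of `K₅` minus an edge using at least two colours
contains a non-monochromatic triangle. -/
theorem stmt_6 {C : Type*} (a b : Fin 5) (hab : a ≠ b)
    (G : SimpleGraph (Fin 5)) (hG : G = (⊤ : SimpleGraph (Fin 5)).deleteEdges {s(a, b)})
    (c : Sym2 (Fin 5) → C)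
    (hc : ∃ e ∈ G.edgeSet, ∃ f ∈ G.edgeSet, c e ≠ c f) :
    ∃ x y z : Fin 5, G.Adj x y ∧ G.Adj y z ∧ G.Adj x z ∧
      (c s(x, y) ≠ c s(y, z) ∨ c s(y, z) ≠ c s(x, z)) := by
  subst hG
  have hadj : ∀ x y : Fin 5,
      ((⊤ : SimpleGraph (Fin 5)).deleteEdges {s(a, b)}).Adj x y ↔
        x ≠ y ∧ s(x, y) ≠ s(a, b) := by
    intro x y
    simp [SimpleGraph.deleteEdges_adj]
  by_contra hcon
  push_neg at hcon
  -- the three vertices outside {a, b}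
  have hcard : ({a, b}ᶜ : Finset (Fin 5)).card = 3 := by
    rw [Finset.card_compl]
    rw [Finset.card_insert_of_notMem (by simpa using hab), Finset.card_singleton]
    rfl
  obtain ⟨p, q, r, hpq, hpr, hqr, hset⟩ := Finset.card_eq_three.mp hcard
  have hpmem : p ∈ ({a, b}ᶜ : Finset (Fin 5)) := by rw [hset]; simp
  have hqmem : q ∈ ({a, b}ᶜ : Finset (Fin 5)) := by rw [hset]; simp
  have hrmem : r ∈ ({a, b}ᶜ : Finset (Fin 5)) := by rw [hset]; simp
  simp only [Finset.mem_compl, Finset.mem_insert, Finset.mem_singleton, not_or] at hpmem hqmem hrmem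
  have hmem : ∀ v : Fin 5, v ≠ a → v ≠ b → v = p ∨ v = q ∨ v = r := by
    intro v hva hvb
    have : v ∈ ({a, b}ᶜ : Finset (Fin 5)) := by simp [hva, hvb]
    rw [hset] at this
    simpa using this
  have hne : ∀ u v : Fin 5, u ≠ a → u ≠ b → s(u, v) ≠ s(a, b) := by
    intro u v hua hub h
    rw [Sym2.eq_iff] at h
    tauto
  have hne' : ∀ u v : Fin 5, v ≠ a → v ≠ b → s(u, v) ≠ s(a, b) := by
    intro u v hva hvb h
    rw [Sym2.eq_iff] at h
    tauto
  have Htri : ∀ x y z : Fin 5, x ≠ y → y ≠ z → x ≠ z →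
      s(x, y) ≠ s(a, b) → s(y, z) ≠ s(a, b) → s(x, z) ≠ s(a, b) →
      c s(x, y) = c s(y, z) ∧ c s(y, z) = c s(x, z) := by
    intro x y z h1 h2 h3 h4 h5 h6
    exact hcon x y z ((hadj x y).2 ⟨h1, h4⟩) ((hadj y z).2 ⟨h2, h5⟩) ((hadj x z).2 ⟨h3, h6⟩)
  -- the triangle pqr is monochromatic
  obtain ⟨hT1, hT2⟩ := Htri p q r hpq hqr hpr
    (hne _ _ hpmem.1 hpmem.2) (hne _ _ hqmem.1 hqmem.2) (hne _ _ hpmem.1 hpmem.2)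
  -- sub-lemma A: any edge within {p,q,r} has colour c s(p,q)
  have A : ∀ u v : Fin 5, u ≠ v → (u = p ∨ u = q ∨ u = r) → (v = p ∨ v = q ∨ v = r) →
      c s(u, v) = c s(p, q) := by
    intro u v huv hu hv
    rcases hu with rfl | rfl | rfl <;> rcases hv with rfl | rfl | rfl
    · exact absurd rfl huv
    · rfl
    · exact (hT1.trans hT2).symm
    · rw [Sym2.eq_swap]
    · exact absurd rfl huv
    · exact hT1.symm
    · rw [Sym2.eq_swap]; exact (hT1.trans hT2).symm
    · rw [Sym2.eq_swap]; exact hT1.symm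
    · exact absurd rfl huv
  -- sub-lemma B: any edge has colour c s(p,q)
  have B : ∀ u v : Fin 5, u ≠ v → s(u, v) ≠ s(a, b) → c s(u, v) = c s(p, q) := by
    -- first handle the case u ∈ {a, b}
    have Baux : ∀ u v : Fin 5, u ≠ v → s(u, v) ≠ s(a, b) → (u = a ∨ u = b) →
        c s(u, v) = c s(p, q) := by
      intro u v huv hs hu
      have hva : v ≠ a ∧ v ≠ b := by
        constructor <;> rintro rfl
        · rcases hu with rfl | rfl
          · exact huv rfl
          · exact hs (Sym2.eq_swap)
        · rcases hu with rfl | rfl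
          · exact hs rfl
          · exact huv rfl
      have hv := hmem v hva.1 hva.2
      have hu' : u ≠ p ∧ u ≠ q ∧ u ≠ r := by
        rcases hu with rfl | rfl
        · exact ⟨fun h => hpmem.1 h.symm, fun h => hqmem.1 h.symm, fun h => hrmem.1 h.symm⟩
        · exact ⟨fun h => hpmem.2 h.symm, fun h => hqmem.2 h.symm, fun h => hrmem.2 h.symm⟩
      -- choose z in {p,q,r} distinct from v
      obtain ⟨z, hz, hzv⟩ : ∃ z : Fin 5, (z = p ∨ z = q ∨ z = r) ∧ v ≠ z := by
        rcases hv with rfl | rfl | rfl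
        · exact ⟨q, Or.inr (Or.inl rfl), hpq⟩
        · exact ⟨p, Or.inl rfl, fun h => hpq h.symm⟩
        · exact ⟨p, Or.inl rfl, fun h => hpr h.symm⟩
      have huz : u ≠ z := by
        rcases hz with rfl | rfl | rfl
        · exact hu'.1
        · exact hu'.2.1
        · exact hu'.2.2
      have hz' : z ≠ a ∧ z ≠ b := by
        rcases hz with rfl | rfl | rfl
        · exact hpmem
        · exact hqmem
        · exact hrmem
      obtain ⟨h1, _⟩ := Htri u v z huv hzv huz hs
        (hne _ _ hva.1 hva.2) (hne' _ _ hz'.1 hz'.2)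
      rw [h1]
      exact A v z hzv hv hz
    intro u v huv hs
    by_cases hu : u = a ∨ u = b
    · exact Baux u v huv hs hu
    · by_cases hv : v = a ∨ v = b
      · rw [Sym2.eq_swap]
        exact Baux v u (Ne.symm huv) (by rw [Sym2.eq_swap]; exact hs) hv
      · push_neg at hu hv
        exact A u v huv (hmem u hu.1 hu.2) (hmem v hv.1 hv.2)
  -- conclude: c is constant on edges, contradicting hc
  obtain ⟨e, he, f, hf, hef⟩ := hc
  apply hef
  induction e using Sym2.ind with
  | _ x y =>
    induction f using Sym2.ind with
    | _ u v =>
      rw [SimpleGraph.mem_edgeSet, hadj] at he hf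
      rw [B x y he.1 he.2, B u v hf.1 hf.2]
end

section
/- Let H be a graph with at least two edges. Then the maximum running time of the H-bootstrap process over all n-vertex starting graphs satisfies M_H(n) ≤ 2·ex(n,H), where ex(n,H) is the Turán number of H. -/
/-!
Let `T` be the running time. For each `k < ⌈T/2⌉` pick one edge `e k` that is added at the odd
step `2k + 1`; these edges are distinct, so they span a graph with `⌈T/2⌉` edges. That graph is
`H`-free: in a copy of `H` among the `e k`, let `e i` be the copy edge with the largest index.
Since `H` has another edge, `i ≥ 1`, and all other copy edges are present at time `2i - 1`, so
`e i` is added at time `2i` at the latest, although it is new at time `2i + 1`.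
-/

open SimpleGraph Finset

/-- `f` maps `H` to a copy of `H` inside `G`. -/
def IsCopyOf {α V : Type*} (H : SimpleGraph α) (G : SimpleGraph V) (f : α → V) : Prop :=
  Function.Injective f ∧ ∀ a b, H.Adj a b → G.Adj (f a) (f b)

/-- One round of the `H`-bootstrap process: add every edge whose addition
creates a new copy of `H` (i.e. the edge is the last missing edge of a copy of `H`). -/
def bootStep {α V : Type*} (H : SimpleGraph α) (G : SimpleGraph V) : SimpleGraph V where
  Adj u v := G.Adj u v ∨ (u ≠ v ∧ ∃ f : α → V,
      IsCopyOf H (G ⊔ SimpleGraph.fromEdgeSet {s(u, v)}) f ∧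
      ∃ a b, H.Adj a b ∧ f a = u ∧ f b = v)
  symm := by
    constructor
    intro u v h
    rcases h with h | ⟨hne, f, hf, a, b, hab, hfa, hfb⟩
    · exact Or.inl h.symm
    · refine Or.inr ⟨hne.symm, f, ?_, b, a, hab.symm, hfb, hfa⟩
      rwa [Sym2.eq_swap]
  loopless := by
    constructor
    intro u h
    rcases h with h | ⟨hne, _⟩
    · exact G.irrefl h
    · exact hne rfl

/-- The `H`-bootstrap process on starting graph `G`. -/
def bootProc {α V : Type*} (H : SimpleGraph α) (G : SimpleGraph V) : ℕ → SimpleGraph V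
  | 0 => G
  | (n + 1) => bootStep H (bootProc H G n)

/-- The running time of the `H`-process on `G`: the least `t` with `G_{t+1} = G_t`. -/
noncomputable def bootRunTime {α V : Type*} (H : SimpleGraph α) (G : SimpleGraph V) : ℕ :=
  sInf {t | bootProc H G (t + 1) = bootProc H G t}

/-- The final (stabilised) graph of the `H`-process on `G`. -/
noncomputable def bootFinal {α V : Type*} (H : SimpleGraph α) (G : SimpleGraph V) :
    SimpleGraph V :=
  bootProc H G (bootRunTime H G)

/-- `G` contains a copy of `H` (as a subgraph). -/
def HasCopy {α V : Type*} (H : SimpleGraph α) (G : SimpleGraph V) : Prop :=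
  ∃ f : α → V, IsCopyOf H G f

/-- The Turán (extremal) number `ex(n, H)`: the maximum number of edges of an
`n`-vertex `H`-free graph. -/
noncomputable def exNum {α : Type*} (n : ℕ) (H : SimpleGraph α) : ℕ :=
  sSup {m | ∃ G : SimpleGraph (Fin n), ¬ HasCopy H G ∧ G.edgeSet.ncard = m}

section BootstrapProcess

variable {α V : Type*} (H : SimpleGraph α) (G : SimpleGraph V)

def IsAddedAfter (t : ℕ) (e : Sym2 V) : Prop :=
  e ∈ (bootProc H G (t + 1)).edgeSet ∧ e ∉ (bootProc H G t).edgeSet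

lemma le_bootStep : G ≤ bootStep H G := fun _ _ => Or.inl

lemma bootProc_monotone : Monotone (bootProc H G) :=
  monotone_nat_of_le_succ fun t => le_bootStep H (bootProc H G t)

lemma exists_isAddedAfter_of_lt_bootRunTime {t : ℕ} (ht : t < bootRunTime H G) :
    ∃ e, IsAddedAfter H G t e := by
  have hne : bootProc H G t ≠ bootProc H G (t + 1) :=
    fun h => (Nat.sInf_le h.symm).not_gt ht
  exact Set.exists_of_ssubset <| edgeSet_ssubset_edgeSet.mpr <|
    (bootProc_monotone H G t.le_succ).lt_of_ne hne

variable {H}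

lemma bootStep_adj_of_forall_adj_or_eq {G' : SimpleGraph V} {f : α → V}
    (hf : Function.Injective f) {a₀ b₀ : α} (h₀ : H.Adj a₀ b₀)
    (h : ∀ a b, H.Adj a b → G'.Adj (f a) (f b) ∨ s(f a, f b) = s(f a₀, f b₀)) :
    (bootStep H G').Adj (f a₀) (f b₀) := by
  refine Or.inr ⟨fun he => h₀.ne (hf he), f, ⟨hf, fun a b hab => ?_⟩,
    a₀, b₀, h₀, rfl, rfl⟩
  rcases h a b hab with hadj | heq
  · exact Or.inl hadj
  · exact Or.inr ((fromEdgeSet_adj _).mpr ⟨heq, fun he => hab.ne (hf he)⟩)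

lemma exists_adj_sym2_map_ne (hH : 2 ≤ H.edgeSet.ncard) {f : α → V}
    (hf : Function.Injective f) (a₀ b₀ : α) :
    ∃ a b, H.Adj a b ∧ s(f a, f b) ≠ s(f a₀, f b₀) := by
  obtain ⟨e, he, hne⟩ := Set.exists_ne_of_one_lt_ncard hH s(a₀, b₀)
  induction e using Sym2.ind with
  | h a b =>
    refine ⟨a, b, he, fun himg => hne (Sym2.map.injective hf ?_)⟩
    simpa only [Sym2.map_mk] using himg

end BootstrapProcess

section OddStepEdges

variable {α V : Type*} {H : SimpleGraph α} {G : SimpleGraph V} {K : ℕ} {e : Fin K → Sym2 V}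

lemma mem_edgeSet_bootProc_of_le (he : ∀ k : Fin K, IsAddedAfter H G (2 * k) (e k))
    {k : Fin K} {t : ℕ} (hkt : 2 * k + 1 ≤ t) : e k ∈ (bootProc H G t).edgeSet :=
  edgeSet_mono (bootProc_monotone H G hkt) (he k).1

lemma injective_of_isAddedAfter_two_mul (he : ∀ k : Fin K, IsAddedAfter H G (2 * k) (e k)) :
    Function.Injective e := by
  have hlt : ∀ k l, k < l → e k ≠ e l := fun k l hkl hkl' =>
    (he l).2 (hkl' ▸ mem_edgeSet_bootProc_of_le he (by omega))
  intro k l hkl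
  by_contra hne
  rcases Ne.lt_or_gt hne with h | h
  exacts [hlt k l h hkl, hlt l k h hkl.symm]

theorem not_hasCopy_of_edgeSet_subset_range (hH : 2 ≤ H.edgeSet.ncard)
    (he : ∀ k : Fin K, IsAddedAfter H G (2 * k) (e k))
    {F : SimpleGraph V} (hF : F.edgeSet ⊆ Set.range e) : ¬ HasCopy H F := by
  classical
  rintro ⟨f, hf, hfF⟩
  have hindex : ∀ a b, H.Adj a b → ∃ k, e k = s(f a, f b) := fun a b hab => hF (hfF a b hab)
  let S : Finset (Fin K) := univ.filter fun k => ∃ a b, H.Adj a b ∧ e k = s(f a, f b)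
  have hmemS : ∀ a b, H.Adj a b → ∀ k, e k = s(f a, f b) → k ∈ S :=
    fun a b hab k hk => mem_filter.mpr ⟨mem_univ k, a, b, hab, hk⟩
  obtain ⟨⟨a, b⟩, hab⟩ := Set.nonempty_of_ncard_ne_zero (by omega : H.edgeSet.ncard ≠ 0)
  obtain ⟨k, hk⟩ := hindex a b hab
  obtain ⟨i, hiS, hmax⟩ := S.exists_max_image id ⟨k, hmemS a b hab k hk⟩
  obtain ⟨a₀, b₀, h₀, hi⟩ := (mem_filter.mp hiS).2
  have hpos : 1 ≤ (i : ℕ) := by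
    obtain ⟨a, b, hab, hne⟩ := exists_adj_sym2_map_ne hH hf a₀ b₀
    obtain ⟨k, hk⟩ := hindex a b hab
    have hki : k ≠ i := fun hki => hne (by rw [← hk, ← hi, hki])
    have hk_le : k ≤ i := hmax k (hmemS a b hab k hk)
    omega
  have hadded : (bootStep H (bootProc H G (2 * i - 1))).Adj (f a₀) (f b₀) := by
    refine bootStep_adj_of_forall_adj_or_eq hf h₀ fun a b hab => ?_
    obtain ⟨k, hk⟩ := hindex a b hab
    by_cases hki : k = i
    · exact Or.inr (by rw [← hk, ← hi, hki])
    · have hk_le : k ≤ i := hmax k (hmemS a b hab k hk)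
      left
      rw [← mem_edgeSet, ← hk]
      exact mem_edgeSet_bootProc_of_le he (by omega)
  have htime : 2 * (i : ℕ) - 1 + 1 = 2 * i := by omega
  have hnew := (he i).2
  rw [hi, ← htime] at hnew
  exact hnew hadded

end OddStepEdges

lemma ncard_edgeSet_le_exNum {α : Type*} {H : SimpleGraph α} {n : ℕ} {F : SimpleGraph (Fin n)}
    (hF : ¬ HasCopy H F) : F.edgeSet.ncard ≤ exNum n H := by
  refine le_csSup ⟨Nat.card (Sym2 (Fin n)), ?_⟩ ⟨F, hF, rfl⟩
  rintro m ⟨F', -, rfl⟩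
  simpa only [Set.ncard_univ] using Set.ncard_le_ncard (Set.subset_univ F'.edgeSet)

/-- For any `H` with at least two edges, the running time of the `H`-process on any
`n`-vertex graph is at most `2 · ex(n, H)`; i.e. `M_H(n) ≤ 2 ex(n, H)`. -/
theorem stmt_8 {α : Type*} (H : SimpleGraph α) (hH : 2 ≤ H.edgeSet.ncard)
    (n : ℕ) (G : SimpleGraph (Fin n)) :
    bootRunTime H G ≤ 2 * exNum n H := by
  set T := bootRunTime H G
  choose e he using fun k : Fin ((T + 1) / 2) =>
    exists_isAddedAfter_of_lt_bootRunTime H G (t := 2 * k) (by omega)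
  have hdiag : Disjoint (Set.range e) Sym2.diagSet :=
    Set.disjoint_left.mpr fun _ ⟨k, hk⟩ => hk ▸ not_isDiag_of_mem_edgeSet _ (he k).1
  have hF : (fromEdgeSet (Set.range e)).edgeSet = Set.range e := by
    rw [edgeSet_fromEdgeSet, hdiag.sdiff_eq_left]
  have hcard := ncard_edgeSet_le_exNum (not_hasCopy_of_edgeSet_subset_range hH he hF.subset)
  rw [hF, Set.ncard_range_of_injective (injective_of_isAddedAfter_two_mul he),
    Nat.card_fin] at hcard
  omega
end

section
/- Let k ≥ 5 and let (Hᵢ, eᵢ)_{i∈[d]} be a simple K_k-chain: copies H₁,…,H_d of K_k on pairwise disjoint vertex sets except that consecutive copies Hᵢ, Hᵢ₊₁ share exactly the two endpoints of the edge eᵢ. Then any copy F of K_k minus an edge in G := ∪ᵢ Hᵢ is contained in a single Hᵢ. -/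
open SimpleGraph Finset

/-- The union of the cliques on the vertex sets `A i`, `i ∈ [d]`. -/
def unionCliques {V : Type*} [DecidableEq V] (A : ℕ → Finset V) (d : ℕ) : SimpleGraph V where
  Adj u v := u ≠ v ∧ ∃ i ∈ Finset.Icc 1 d, u ∈ A i ∧ v ∈ A i
  symm := by
    constructor
    intro u v h
    obtain ⟨hne, i, hi, hu, hv⟩ := h
    exact ⟨hne.symm, i, hi, hv, hu⟩
  loopless := ⟨fun u h => h.1 rfl⟩

/-!
For `1 ≤ i < d` the two vertices of `Aᵢ ∩ Aᵢ₊₁` separate `A₁ ∪ ⋯ ∪ Aᵢ` from `Aᵢ₊₁ ∪ ⋯ ∪ A_d`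
in `G`. A copy of `K_k⁻` with `k ≥ 5` cannot be split by two vertices: if it had vertices
strictly on both sides, each of them on one side would be non-adjacent to each on the other,
so there would be one on each side and at most `2 + 2 < k` vertices in total. Hence the copy
lies on one side of every separator; taking the least `i` with the copy inside
`A₁ ∪ ⋯ ∪ Aᵢ`, it also lies inside `Aᵢ ∪ ⋯ ∪ A_d`, and these two unions meet in `Aᵢ`.
-/

section

variable {V : Type*}

def SimpleGraph.IsCliqueExcept (G : SimpleGraph V) (S : Finset V) (z : Sym2 V) : Prop :=
  ∀ u ∈ S, ∀ v ∈ S, u ≠ v → s(u, v) ≠ z → G.Adj u v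

namespace unionCliques

variable (A : ℕ → Finset V) (d : ℕ)

def lowerPart (i : ℕ) : Set V := {v | ∃ j ∈ Icc 1 d, j ≤ i ∧ v ∈ A j}

def upperPart (i : ℕ) : Set V := {v | ∃ j ∈ Icc 1 d, i < j ∧ v ∈ A j}

variable {A d}

theorem mem_lowerPart_or_upperPart {u : V} {j : ℕ} (hj : j ∈ Icc 1 d) (hu : u ∈ A j)
    (i : ℕ) :
    u ∈ lowerPart A d i ∨ u ∈ upperPart A d i := by
  rcases le_or_gt j i with hji | hij
  exacts [.inl ⟨j, hj, hji, hu⟩, .inr ⟨j, hj, hij, hu⟩]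

end unionCliques

variable [DecidableEq V]

namespace SimpleGraph

theorem IsCliqueExcept.exists_adj {G : SimpleGraph V} {S : Finset V} {x y u : V}
    (hS : G.IsCliqueExcept S s(x, y)) (hcard : 4 ≤ #S) (hu : u ∈ S) : ∃ v, G.Adj u v := by
  obtain ⟨w, hwS, hw⟩ := exists_mem_notMem_of_card_lt_card
    ((card_le_three (a := u) (b := x) (c := y)).trans_lt hcard)
  simp only [mem_insert, mem_singleton, not_or] at hw
  obtain ⟨hwu, hwx, hwy⟩ := hw
  refine ⟨w, hS u hu w hwS (Ne.symm hwu) fun h => ?_⟩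
  rcases Sym2.eq_iff.1 h with ⟨-, h⟩ | ⟨-, h⟩
  exacts [hwy h, hwx h]

theorem IsCliqueExcept.subset_or_subset {G : SimpleGraph V} {S C : Finset V} {z : Sym2 V}
    {L R : Set V} (hS : G.IsCliqueExcept S z) (hcard : 5 ≤ #S) (hC : #C ≤ 2)
    (hedge : ∀ u v, G.Adj u v → u ∈ L ∧ v ∈ L ∨ u ∈ R ∧ v ∈ R)
    (hcover : ↑S ⊆ L ∪ R) (hLR : L ∩ R ⊆ C) : ↑S ⊆ L ∨ ↑S ⊆ R := by
  by_contra! h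
  obtain ⟨⟨b, hbS, hbL⟩, ⟨a, haS, haR⟩⟩ := And.imp Set.not_subset.1 Set.not_subset.1 h
  have hmissing : ∀ a' ∈ S, a' ∉ R → ∀ b' ∈ S, b' ∉ L → s(a', b') = z := by
    intro a' ha'S ha'R b' hb'S hb'L
    have ha'L : a' ∈ L := (hcover ha'S).resolve_right ha'R
    by_contra hz
    have hne : a' ≠ b' := fun h => hb'L (h ▸ ha'L)
    rcases hedge a' b' (hS a' ha'S b' hb'S hne hz) with ⟨-, h⟩ | ⟨h, -⟩
    exacts [hb'L h, ha'R h]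
  have hab := hmissing a haS haR b hbS hbL
  have hsub : S ⊆ insert a (insert b C) := by
    intro w hwS
    by_cases hwR : w ∈ R
    · by_cases hwL : w ∈ L
      · exact mem_insert_of_mem (mem_insert_of_mem (hLR ⟨hwL, hwR⟩))
      · have : b = w := Sym2.congr_right.1 (hab.trans (hmissing a haS haR w hwS hwL).symm)
        simp [this]
    · have : a = w := Sym2.congr_left.1 (hab.trans (hmissing w hwS hwR b hbS hbL).symm)
      simp [this]
  have := card_le_card hsub
  have := card_insert_le a (insert b C)
  have := card_insert_le b C
  omega

end SimpleGraph

theorem card_eq_two_of_mem_iff_mem_sym2 {s : Finset V} {z : Sym2 V} (hz : ¬z.IsDiag)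
    (hs : ∀ x, x ∈ s ↔ x ∈ z) : #s = 2 := by
  rw [← z.card_toFinset_of_not_isDiag hz]
  congr 1
  ext x
  rw [hs, Sym2.mem_toFinset]

namespace unionCliques

variable {A : ℕ → Finset V} {d : ℕ}

theorem adj_mem_lowerPart_or_upperPart {u v : V} (h : (unionCliques A d).Adj u v) (i : ℕ) :
    u ∈ lowerPart A d i ∧ v ∈ lowerPart A d i ∨ u ∈ upperPart A d i ∧ v ∈ upperPart A d i := by
  obtain ⟨-, j, hj, hu, hv⟩ := h
  rcases le_or_gt j i with hji | hij
  · exact .inl ⟨⟨j, hj, hji, hu⟩, ⟨j, hj, hji, hv⟩⟩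
  · exact .inr ⟨⟨j, hj, hij, hu⟩, ⟨j, hj, hij, hv⟩⟩

theorem le_succ_of_mem_of_mem
    (hdisj : ∀ i ∈ Icc 1 d, ∀ j ∈ Icc 1 d, i + 1 < j → A i ∩ A j = ∅)
    {v : V} {i j : ℕ} (hi : i ∈ Icc 1 d) (hj : j ∈ Icc 1 d)
    (hvi : v ∈ A i) (hvj : v ∈ A j) : j ≤ i + 1 := by
  by_contra! h
  simpa [hdisj i hi j hj h] using mem_inter.2 ⟨hvi, hvj⟩

theorem lowerPart_inter_upperPart_subset
    (hdisj : ∀ i ∈ Icc 1 d, ∀ j ∈ Icc 1 d, i + 1 < j → A i ∩ A j = ∅)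
    (i : ℕ) :
    lowerPart A d i ∩ upperPart A d i ⊆ ↑(A i ∩ A (i + 1)) := by
  rintro v ⟨⟨j, hj, hji, hvj⟩, ⟨j', hj', hij', hvj'⟩⟩
  have := le_succ_of_mem_of_mem hdisj hj hj' hvj hvj'
  obtain rfl : j = i := by omega
  obtain rfl : j' = j + 1 := by omega
  exact mem_inter.2 ⟨hvj, hvj'⟩

theorem lowerPart_inter_upperPart_pred_subset
    (hdisj : ∀ i ∈ Icc 1 d, ∀ j ∈ Icc 1 d, i + 1 < j → A i ∩ A j = ∅)
    (i : ℕ) :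
    lowerPart A d i ∩ upperPart A d (i - 1) ⊆ ↑(A i) := by
  rintro v ⟨⟨j, hj, hji, hvj⟩, ⟨j', hj', hij', hvj'⟩⟩
  have := le_succ_of_mem_of_mem hdisj hj hj' hvj hvj'
  rcases eq_or_lt_of_le hji with rfl | hji
  · exact hvj
  · obtain rfl : j' = i := by omega
    exact hvj'

theorem subset_lowerPart_or_subset_upperPart
    (hdisj : ∀ i ∈ Icc 1 d, ∀ j ∈ Icc 1 d, i + 1 < j → A i ∩ A j = ∅)
    {S : Finset V} {z : Sym2 V} (hS : (unionCliques A d).IsCliqueExcept S z) (hcard : 5 ≤ #S)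
    (hmem : ∀ u ∈ S, ∃ j ∈ Icc 1 d, u ∈ A j) {i : ℕ} (hi : #(A i ∩ A (i + 1)) ≤ 2) :
    ↑S ⊆ lowerPart A d i ∨ ↑S ⊆ upperPart A d i :=
  hS.subset_or_subset hcard hi (fun _ _ h => adj_mem_lowerPart_or_upperPart h i)
    (fun u hu => by
      obtain ⟨j, hj, huj⟩ := hmem u hu
      exact mem_lowerPart_or_upperPart hj huj i)
    (lowerPart_inter_upperPart_subset hdisj i)

theorem exists_subset_of_subset_lowerPart_or_subset_upperPart
    (hdisj : ∀ i ∈ Icc 1 d, ∀ j ∈ Icc 1 d, i + 1 < j → A i ∩ A j = ∅)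
    {S : Finset V} (hne : S.Nonempty) (hmem : ∀ u ∈ S, ∃ j ∈ Icc 1 d, u ∈ A j)
    (hsplit : ∀ i ∈ Icc 1 (d - 1), ↑S ⊆ lowerPart A d i ∨ ↑S ⊆ upperPart A d i) :
    ∃ i ∈ Icc 1 d, S ⊆ A i := by
  classical
  have hlow_d : ↑S ⊆ lowerPart A d d := fun u hu => by
    obtain ⟨j, hj, huj⟩ := hmem u hu
    exact ⟨j, hj, (mem_Icc.1 hj).2, huj⟩
  have hlow : ∃ n, ↑S ⊆ lowerPart A d n := ⟨d, hlow_d⟩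
  set i := Nat.find hlow
  have hi0 : i ≠ 0 := fun h => by
    obtain ⟨u, hu⟩ := hne
    obtain ⟨j, hj, hji, -⟩ : u ∈ lowerPart A d i := Nat.find_spec hlow hu
    simp only [mem_Icc] at hj
    omega
  have hid : i ≤ d := Nat.find_min' hlow hlow_d
  have hup : ↑S ⊆ upperPart A d (i - 1) := by
    by_cases hi1 : i = 1
    · intro u hu
      obtain ⟨j, hj, huj⟩ := hmem u hu
      exact ⟨j, hj, by simp only [mem_Icc] at hj; omega, huj⟩
    · exact (hsplit (i - 1) (mem_Icc.2 ⟨by omega, by omega⟩)).resolve_left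
        (Nat.find_min hlow (by omega))
  exact ⟨i, mem_Icc.2 ⟨by omega, hid⟩, fun u hu =>
    lowerPart_inter_upperPart_pred_subset hdisj i ⟨Nat.find_spec hlow hu, hup hu⟩⟩

end unionCliques

end

open unionCliques

theorem stmt_11_general {V : Type*} [DecidableEq V] (k d : ℕ) (hk : 5 ≤ k)
    (A : ℕ → Finset V) (e : ℕ → Sym2 V)
    -- non-consecutive copies are vertex-disjoint
    (hdisj : ∀ i ∈ Finset.Icc 1 d, ∀ j ∈ Finset.Icc 1 d, i + 1 < j → A i ∩ A j = ∅)
    -- consecutive copies intersect exactly in the two endpoints of the edge `eᵢ`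
    (hcons : ∀ i ∈ Finset.Icc 1 (d - 1),
      ¬ (e i).IsDiag ∧ ∀ x : V, (x ∈ A i ∩ A (i + 1) ↔ x ∈ e i)) :
    -- every copy of `K_k` minus an edge in `∪ᵢ Hᵢ` lies in a single `Hᵢ`
    ∀ (S : Finset V) (x y : V), S.card = k → x ∈ S → y ∈ S → x ≠ y →
      (∀ u ∈ S, ∀ v ∈ S, u ≠ v → s(u, v) ≠ s(x, y) → (unionCliques A d).Adj u v) →
      ∃ i ∈ Finset.Icc 1 d, S ⊆ A i := by
  intro S x y hScard _ _ _ hS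
  replace hS : (unionCliques A d).IsCliqueExcept S s(x, y) := hS
  have hcard : 5 ≤ #S := hScard ▸ hk
  have hmem : ∀ u ∈ S, ∃ j ∈ Icc 1 d, u ∈ A j := fun u hu => by
    obtain ⟨v, -, j, hj, huj, -⟩ := hS.exists_adj (by omega) hu
    exact ⟨j, hj, huj⟩
  refine exists_subset_of_subset_lowerPart_or_subset_upperPart hdisj
    (card_pos.1 (by omega)) hmem fun i hi => ?_
  obtain ⟨hdiag, hinter⟩ := hcons i hi
  exact subset_lowerPart_or_subset_upperPart hdisj hS hcard hmem
    (card_eq_two_of_mem_iff_mem_sym2 hdiag hinter).le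

/-- Observation 2.4: in a simple `K_k`-chain (`k ≥ 5`), i.e. copies `H₁, …, H_d` of `K_k`
with pairwise disjoint vertex sets except that consecutive ones share exactly the two
endpoints of the edge `eᵢ`, every copy `F` of `K_k` minus an edge in `G = ∪ᵢ Hᵢ` is
contained in a single `Hᵢ`. -/
theorem stmt_11 {V : Type*} [DecidableEq V] (k d : ℕ) (hk : 5 ≤ k)
    (A : ℕ → Finset V) (e : ℕ → Sym2 V)
    (hA : ∀ i ∈ Finset.Icc 1 d, (A i).card = k)
    -- non-consecutive copies are vertex-disjoint
    (hdisj : ∀ i ∈ Finset.Icc 1 d, ∀ j ∈ Finset.Icc 1 d, i + 1 < j → A i ∩ A j = ∅)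
    -- consecutive copies intersect exactly in the two endpoints of the edge `eᵢ`
    (hcons : ∀ i ∈ Finset.Icc 1 (d - 1),
      ¬ (e i).IsDiag ∧ ∀ x : V, (x ∈ A i ∩ A (i + 1) ↔ x ∈ e i)) :
    -- every copy of `K_k` minus an edge in `∪ᵢ Hᵢ` lies in a single `Hᵢ`
    ∀ (S : Finset V) (x y : V), S.card = k → x ∈ S → y ∈ S → x ≠ y →
      (∀ u ∈ S, ∀ v ∈ S, u ≠ v → s(u, v) ≠ s(x, y) → (unionCliques A d).Adj u v) →
      ∃ i ∈ Finset.Icc 1 d, S ⊆ A i :=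
  stmt_11_general k d hk A e hdisj hcons
end

section
/- For the star K_{1,t-1} on t vertices and n sufficiently large, the maximum running time of the K_{1,t-1}-bootstrap process on n-vertex graphs equals t − 1. -/
open SimpleGraph Finset

/-! Write `d = t - 2`. In the `K_{1,d+1}`-process an edge `uv` is added exactly when `u` or
`v` has degree at least `d`, so a vertex of degree at least `d` is universal one round later.
Every round that changes the graph therefore creates a new universal vertex; after `d` such
rounds every vertex has degree at least `d`, and the next round completes the graph. Hence the
process stops after at most `d + 1 = t - 1` rounds.

Conversely, start from the stars `K_{1,d}, …, K_{1,1}` and two isolated vertices `x, y`. The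
centre of `K_{1,s}` becomes universal in round `d + 1 - s`, and in the first `d - 1` rounds
every new edge has such a centre as an end. So after round `k < d` the vertices `x` and `y` have
degree `k` and are still not joined, whereas after round `d` they see all `d` centres and are
joined in round `d + 1`. -/

section Bootstrap

variable {α V : Type*} (H : SimpleGraph α) (G : SimpleGraph V)

lemma le_bootProc (k : ℕ) : G ≤ bootProc H G k := by
  induction k with
  | zero => exact le_rfl
  | succ k ih => exact ih.trans (le_bootStep H _)

lemma bootStep_top : bootStep H (⊤ : SimpleGraph V) = ⊤ :=
  top_le_iff.1 (le_bootStep H ⊤)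

lemma bootProc_succ_eq_of_le {k m : ℕ} (h : bootProc H G (k + 1) = bootProc H G k)
    (hkm : k ≤ m) : bootProc H G (m + 1) = bootProc H G m := by
  induction m, hkm using Nat.le_induction with
  | base => exact h
  | succ m _ ih => exact congrArg (bootStep H) ih

lemma bootRunTime_le {k : ℕ} (h : bootProc H G (k + 1) = bootProc H G k) :
    bootRunTime H G ≤ k :=
  Nat.sInf_le h

lemma bootRunTime_eq_succ {k : ℕ} (h : bootProc H G (k + 2) = bootProc H G (k + 1))
    (h' : bootProc H G (k + 1) ≠ bootProc H G k) : bootRunTime H G = k + 1 :=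
  (Nat.sInf_upward_closed_eq_succ_iff (fun _ _ hle hs ↦ bootProc_succ_eq_of_le H G hs hle) k).2
    ⟨h, h'⟩

lemma bootRunTime_bot : bootRunTime (⊥ : SimpleGraph α) G = 0 := by
  refine Nat.le_zero.1 (bootRunTime_le _ G ?_)
  ext u v
  exact ⟨fun h ↦ h.resolve_right fun ⟨_, _, _, a, b, hab, _⟩ ↦ hab, Or.inl⟩

end Bootstrap

section StarCopies

variable {V : Type*} {G : SimpleGraph V}

lemma le_ncard_neighborSet_of_isCopyOf [Finite V] {m : ℕ} {f : Fin 1 ⊕ Fin m → V}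
    (hf : IsCopyOf (completeBipartiteGraph (Fin 1) (Fin m)) G f) :
    m ≤ (G.neighborSet (f (.inl 0))).ncard := by
  calc m = (Set.range (f ∘ Sum.inr)).ncard := by
        rw [Set.ncard_range_of_injective (hf.1.comp Sum.inr_injective), Nat.card_eq_fintype_card,
          Fintype.card_fin]
    _ ≤ _ := Set.ncard_le_ncard (by rintro _ ⟨i, rfl⟩; exact hf.2 _ _ (by simp))

lemma exists_isCopyOf_star {m : ℕ} {u : V} {T : Finset V} (hT : #T = m)
    (hTu : ↑T ⊆ G.neighborSet u) :
    ∃ f, IsCopyOf (completeBipartiteGraph (Fin 1) (Fin m)) G f ∧ f (.inl 0) = u ∧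
      ∀ w ∈ T, ∃ i, f (.inr i) = w := by
  set e := T.equivFinOfCardEq hT
  have hleaf : ∀ i, G.Adj u (e.symm i) := fun i ↦ hTu (e.symm i).2
  refine ⟨Sum.elim (fun _ ↦ u) fun i ↦ e.symm i, ⟨?_, ?_⟩, rfl,
    fun w hw ↦ ⟨e ⟨w, hw⟩, by simp⟩⟩
  · rintro (a | i) (b | j) h
    · exact congrArg _ (Subsingleton.elim a b)
    · exact absurd h (hleaf j).ne
    · exact absurd h.symm (hleaf i).ne
    · simpa using h
  · rintro (a | i) (b | j) hab <;> simp at hab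
    · exact hleaf j
    · exact (hleaf i).symm

lemma neighborSet_sup_edge_subset (u v : V) :
    (G ⊔ edge u v).neighborSet u ⊆ insert v (G.neighborSet u) := by
  rintro w (h | h)
  · exact Or.inr h
  · rw [edge_adj] at h
    grind

lemma le_ncard_neighborSet_of_isCopyOf_sup_edge [Finite V] {d : ℕ} {u v : V}
    {f : Fin 1 ⊕ Fin (d + 1) → V}
    (hf : IsCopyOf (completeBipartiteGraph (Fin 1) (Fin (d + 1))) (G ⊔ edge u v) f)
    (hu : f (.inl 0) = u) : d ≤ (G.neighborSet u).ncard := by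
  have hcopy := le_ncard_neighborSet_of_isCopyOf hf
  rw [hu] at hcopy
  have := (Set.ncard_le_ncard (neighborSet_sup_edge_subset u v)).trans
    (Set.ncard_insert_le v (G.neighborSet u))
  omega

/-- The star on `u`, `d` of its neighbours and `v` is completed by the edge `uv`. -/
lemma bootStep_star_adj_of_le_ncard [Finite V] {d : ℕ} {u v : V} (hne : u ≠ v)
    (hd : d ≤ (G.neighborSet u).ncard) :
    (bootStep (completeBipartiteGraph (Fin 1) (Fin (d + 1))) G).Adj u v := by
  classical
  by_cases huv : G.Adj u v
  · exact Or.inl huv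
  set N := (G.neighborSet u).toFinite.toFinset
  obtain ⟨s, hsN, hs⟩ := Finset.exists_subset_card_eq
    (hd.trans_eq (Set.ncard_eq_toFinset_card _ (G.neighborSet u).toFinite))
  have hvs : v ∉ s := fun h ↦ huv (by simpa [N] using hsN h)
  obtain ⟨f, hf, hfu, hcover⟩ := exists_isCopyOf_star (G := G ⊔ edge u v) (u := u)
    (T := insert v s) (by rw [Finset.card_insert_of_notMem hvs, hs]) (by
      intro w hw
      rcases Finset.mem_insert.1 hw with rfl | hw
      · exact Or.inr ((edge_adj _ _ _ _).2 ⟨Or.inl ⟨rfl, rfl⟩, hne⟩)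
      · exact Or.inl (by simpa [N] using hsN hw))
  obtain ⟨i, hi⟩ := hcover v (Finset.mem_insert_self v s)
  exact Or.inr ⟨hne, f, hf, .inl 0, .inr i, by simp, hfu, hi⟩

lemma bootStep_star_adj [Finite V] {d : ℕ} {u v : V} :
    (bootStep (completeBipartiteGraph (Fin 1) (Fin (d + 1))) G).Adj u v ↔
      G.Adj u v ∨
        u ≠ v ∧ (d ≤ (G.neighborSet u).ncard ∨ d ≤ (G.neighborSet v).ncard) := by
  constructor
  · rintro (h | ⟨hne, f, hf, a | i, b | j, hab, rfl, rfl⟩)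
    · exact Or.inl h
    · simp at hab
    · obtain rfl := Subsingleton.elim a 0
      exact Or.inr ⟨hne, Or.inl (le_ncard_neighborSet_of_isCopyOf_sup_edge hf rfl)⟩
    · obtain rfl := Subsingleton.elim b 0
      rw [Sym2.eq_swap] at hf
      exact Or.inr ⟨hne, Or.inr (le_ncard_neighborSet_of_isCopyOf_sup_edge hf rfl)⟩
    · simp at hab
  · rintro (h | ⟨hne, hd | hd⟩)
    · exact Or.inl h
    · exact bootStep_star_adj_of_le_ncard hne hd
    · exact (bootStep_star_adj_of_le_ncard hne.symm hd).symm

end StarCopies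

section UpperBound

variable {V : Type*} [Finite V] {d : ℕ} (G : SimpleGraph V)

lemma ncard_isUniversal_lt_bootStep_star
    (h : bootStep (completeBipartiteGraph (Fin 1) (Fin (d + 1))) G ≠ G) :
    {v | G.IsUniversal v}.ncard <
      {v | (bootStep (completeBipartiteGraph (Fin 1) (Fin (d + 1))) G).IsUniversal v}.ncard := by
  obtain ⟨u, v, hnew, hold⟩ : ∃ u v, (bootStep (completeBipartiteGraph (Fin 1)
      (Fin (d + 1))) G).Adj u v ∧ ¬G.Adj u v := by
    by_contra! hc
    exact h (le_antisymm hc (le_bootStep _ G))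
  obtain ⟨w, hw, hdw⟩ : ∃ w, ¬G.IsUniversal w ∧ d ≤ (G.neighborSet w).ncard := by
    rcases bootStep_star_adj.1 hnew with h | ⟨hne, hd | hd⟩
    · exact absurd h hold
    · exact ⟨u, fun hu ↦ hold (hu hne), hd⟩
    · exact ⟨v, fun hv ↦ hold (hv hne.symm).symm, hd⟩
  exact Set.ncard_lt_ncard ⟨fun x hx y hxy ↦ le_bootStep _ G (hx hxy),
    fun hsub ↦ hw (hsub fun _ hne ↦ bootStep_star_adj_of_le_ncard hne hdw)⟩ (Set.toFinite _)

lemma le_ncard_isUniversal_bootProc_star {k : ℕ}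
    (h : ∀ j < k, bootProc (completeBipartiteGraph (Fin 1) (Fin (d + 1))) G (j + 1) ≠
      bootProc (completeBipartiteGraph (Fin 1) (Fin (d + 1))) G j) :
    k ≤ {v | (bootProc (completeBipartiteGraph (Fin 1) (Fin (d + 1))) G k).IsUniversal
      v}.ncard := by
  induction k with
  | zero => exact Nat.zero_le _
  | succ k ih =>
    exact (ih fun j hj ↦ h j (by omega)).trans_lt
      (ncard_isUniversal_lt_bootStep_star _ (h k k.lt_succ_self))

/-- Once `d` vertices are universal, every other vertex has degree at least `d`. -/
lemma bootStep_star_eq_top (h : d ≤ {v | G.IsUniversal v}.ncard) :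
    bootStep (completeBipartiteGraph (Fin 1) (Fin (d + 1))) G = ⊤ := by
  refine eq_top_iff_forall_ne_adj.2 fun u v hne ↦ ?_
  by_cases hu : G.IsUniversal u
  · exact le_bootStep _ G (hu hne)
  refine bootStep_star_adj_of_le_ncard hne (h.trans (Set.ncard_le_ncard fun w hw ↦ ?_))
  exact (hw fun hwu ↦ hu (by rwa [← hwu])).symm

theorem bootProc_star_stable :
    bootProc (completeBipartiteGraph (Fin 1) (Fin (d + 1))) G (d + 2) =
      bootProc (completeBipartiteGraph (Fin 1) (Fin (d + 1))) G (d + 1) := by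
  set H := completeBipartiteGraph (Fin 1) (Fin (d + 1))
  by_cases hstable : ∃ j < d, bootProc H G (j + 1) = bootProc H G j
  · obtain ⟨j, hj, h⟩ := hstable
    exact bootProc_succ_eq_of_le H G h (by omega)
  push Not at hstable
  have htop : bootProc H G (d + 1) = ⊤ :=
    bootStep_star_eq_top _ (le_ncard_isUniversal_bootProc_star G hstable)
  calc bootProc H G (d + 2) = bootStep H ⊤ := congrArg (bootStep H) htop
    _ = bootProc H G (d + 1) := by rw [bootStep_top, htop]

end UpperBound

section LowerBound

variable {V : Type*} {d : ℕ} (a : Fin d ↪ V)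

lemma ncard_image_val_lt {k : ℕ} (hk : k ≤ d) : (a '' {j | (j : ℕ) < k}).ncard = k := by
  rw [Set.ncard_image_of_injective _ a.injective]
  change (Fin.val ⁻¹' Set.Iio k).ncard = k
  rw [Set.ncard_preimage_of_injective_subset_range (s := Set.Iio k) Fin.val_injective
    fun m hm ↦ ⟨⟨m, lt_of_lt_of_le hm hk⟩, rfl⟩, Set.ncard_Iio_nat]

lemma ncard_image_val_lt_le (k : ℕ) : (a '' {j | (j : ℕ) < k}).ncard ≤ k :=
  le_trans Set.ncard_image_le <| (Set.ncard_le_ncard_of_injOn Fin.val (fun _ ↦ id)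
    Fin.val_injective.injOn).trans_eq (Set.ncard_Iio_nat k)

variable [Finite V] {G : SimpleGraph V}

lemma ncard_neighborSet_le_of_subset {G' : SimpleGraph V} {k : ℕ} {u : V}
    (hsub : G'.neighborSet u ⊆ G.neighborSet u ∪ a '' {j | (j : ℕ) < k}) :
    (G'.neighborSet u).ncard ≤ (G.neighborSet u).ncard + k :=
  (Set.ncard_le_ncard hsub).trans <| (Set.ncard_union_le _ _).trans <|
    Nat.add_le_add_left (ncard_image_val_lt_le a k) _

/-- The inclusion fails for `k = d`: the neighbour of `a (d - 1)` has degree `d` after round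
`d - 1` as well. -/
lemma neighborSet_bootProc_star_subset (ha : ∀ j, (G.neighborSet (a j)).ncard ≤ d - j)
    (hleaf : ∀ v ∉ Set.range a, (G.neighborSet v).ncard ≤ 1) :
    ∀ k, k + 1 ≤ d → ∀ u ∉ a '' {j | (j : ℕ) < k},
      (bootProc (completeBipartiteGraph (Fin 1) (Fin (d + 1))) G k).neighborSet u ⊆
        G.neighborSet u ∪ a '' {j | (j : ℕ) < k} := by
  intro k
  induction k with
  | zero => exact fun _ _ _ _ hw ↦ Or.inl hw
  | succ k ih =>
    intro hk u hu w hw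
    have hmono : a '' {j | (j : ℕ) < k} ⊆ a '' {j | (j : ℕ) < k + 1} :=
      Set.image_mono fun _ h ↦ Nat.lt_succ_of_lt h
    have deg_lt : ∀ u ∉ a '' {j | (j : ℕ) < k + 1},
        ((bootProc (completeBipartiteGraph (Fin 1) (Fin (d + 1))) G k).neighborSet u).ncard
          < d := by
      intro u hu
      have hdeg := ncard_neighborSet_le_of_subset a (ih (by omega) u fun h ↦ hu (hmono h))
      by_cases hc : u ∈ Set.range a
      · obtain ⟨j, rfl⟩ := hc
        have hj : k < j := by
          by_contra hj
          exact hu ⟨j, show (j : ℕ) < k + 1 by omega, rfl⟩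
        have := ha j
        omega
      · have := hleaf u hc
        omega
    rcases bootStep_star_adj.1 hw with h | ⟨_, hd | hd⟩
    · exact (ih (by omega) u (fun h ↦ hu (hmono h)) h).imp_right fun h ↦ hmono h
    · exact absurd hd (deg_lt u hu).not_ge
    · exact Or.inr (by_contra fun hw' ↦ (deg_lt w hw').not_ge hd)

/-- The `d - j` leaves and the `j` earlier centres give `a j` degree `d` after round `j`. -/
lemma isUniversal_bootProc_star (ha : ∀ j, d - j ≤ (G.neighborSet (a j)).ncard)
    (hindep : ∀ i j, ¬G.Adj (a i) (a j)) :
    ∀ k, ∀ j : Fin d, (j : ℕ) < k →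
      (bootProc (completeBipartiteGraph (Fin 1) (Fin (d + 1))) G k).IsUniversal (a j) := by
  intro k
  induction k with
  | zero => exact fun _ hj ↦ absurd hj (Nat.not_lt_zero _)
  | succ k ih =>
    intro j hj
    rcases Nat.lt_succ_iff_lt_or_eq.1 hj with hj | rfl
    · exact fun w hw ↦ le_bootStep _ _ (ih j hj hw)
    refine fun w hw ↦ bootStep_star_adj_of_le_ncard hw ?_
    have hsub : G.neighborSet (a j) ∪ a '' {i | (i : ℕ) < j} ⊆
        (bootProc (completeBipartiteGraph (Fin 1) (Fin (d + 1))) G j).neighborSet (a j) := by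
      refine Set.union_subset (fun w hw ↦ le_bootProc _ _ _ hw) ?_
      rintro _ ⟨i, hi, rfl⟩
      exact (ih i hi (a.injective.ne (Fin.ne_of_lt hi))).symm
    have hdisj : Disjoint (G.neighborSet (a j)) (a '' {i | (i : ℕ) < j}) :=
      Set.disjoint_left.2 fun _ hw ⟨i, _, hi⟩ ↦ hindep j i (hi ▸ hw)
    calc d = d - j + j := by omega
      _ ≤ (G.neighborSet (a j) ∪ a '' {i | (i : ℕ) < j}).ncard := by
        rw [Set.ncard_union_eq hdisj, ncard_image_val_lt a j.isLt.le]
        exact Nat.add_le_add_right (ha j) _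
      _ ≤ _ := Set.ncard_le_ncard hsub

lemma not_adj_bootProc_star (ha : ∀ j, (G.neighborSet (a j)).ncard ≤ d - j)
    (hleaf : ∀ v ∉ Set.range a, (G.neighborSet v).ncard ≤ 1) {x y : V}
    (hx : x ∉ Set.range a) (hy : y ∉ Set.range a) (hxG : G.IsIsolated x)
    (hyG : G.IsIsolated y) :
    ∀ k ≤ d, ¬(bootProc (completeBipartiteGraph (Fin 1) (Fin (d + 1))) G k).Adj x y := by
  intro k
  induction k with
  | zero => exact fun _ ↦ hxG y
  | succ k ih =>
    intro hk h
    have deg_lt : ∀ z ∉ Set.range a, G.IsIsolated z →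
        ((bootProc (completeBipartiteGraph (Fin 1) (Fin (d + 1))) G k).neighborSet z).ncard
          < d := by
      intro z hz hzG
      have := ncard_neighborSet_le_of_subset a (neighborSet_bootProc_star_subset a ha hleaf k
        (by omega) z fun ⟨j, _, hj⟩ ↦ hz ⟨j, hj⟩)
      rw [(neighborSet_eq_empty G).2 hzG, Set.ncard_empty] at this
      omega
    rcases bootStep_star_adj.1 h with h | ⟨_, hd | hd⟩
    · exact ih (by omega) h
    · exact (deg_lt x hx hxG).not_ge hd
    · exact (deg_lt y hy hyG).not_ge hd

/-- `x` and `y` are joined only in round `d + 1`, once all `d` centres are universal. -/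
theorem bootRunTime_star_eq_succ (ha : ∀ j, (G.neighborSet (a j)).ncard = d - j)
    (hindep : ∀ i j, ¬G.Adj (a i) (a j))
    (hleaf : ∀ v ∉ Set.range a, (G.neighborSet v).ncard ≤ 1) {x y : V} (hxy : x ≠ y)
    (hx : x ∉ Set.range a) (hy : y ∉ Set.range a) (hxG : G.IsIsolated x)
    (hyG : G.IsIsolated y) :
    bootRunTime (completeBipartiteGraph (Fin 1) (Fin (d + 1))) G = d + 1 := by
  have hdeg : d ≤ ((bootProc (completeBipartiteGraph (Fin 1) (Fin (d + 1))) G d).neighborSet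
      x).ncard := by
    calc d = (Set.range a).ncard := by
          rw [Set.ncard_range_of_injective a.injective, Nat.card_eq_fintype_card, Fintype.card_fin]
      _ ≤ _ := Set.ncard_le_ncard <| by
        rintro _ ⟨j, rfl⟩
        exact (isUniversal_bootProc_star a (fun j ↦ (ha j).ge) hindep d j j.isLt
          fun h ↦ hx ⟨j, h⟩).symm
  refine bootRunTime_eq_succ _ G (bootProc_star_stable G) fun h ↦ ?_
  have hadj := bootStep_star_adj_of_le_ncard hxy hdeg
  exact not_adj_bootProc_star a (fun j ↦ (ha j).le) hleaf hx hy hxG hyG d le_rfl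
    (h ▸ hadj)

end LowerBound

section StarForest

variable {ι : Type*} (ℓ : ι → ℕ)

/-- The disjoint union of the stars `K_{1, ℓ i}`: the star `i` has centre `⟨i, none⟩` and
leaves `⟨i, some j⟩`. -/
def starForest : SimpleGraph (Σ i, Option (Fin (ℓ i))) :=
  SimpleGraph.fromRel fun p q ↦ p.1 = q.1 ∧ p.2 = none ∧ q.2.isSome

lemma starForest_neighborSet_none (i : ι) :
    (starForest ℓ).neighborSet ⟨i, none⟩ = Set.range fun j ↦ ⟨i, some j⟩ := by
  ext ⟨i', _ | j⟩
  · simp [starForest]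
    rintro rfl _ h
    simp at h
  · simp [starForest]
    constructor
    · rintro ⟨-, rfl⟩
      exact ⟨rfl, j, HEq.rfl⟩
    · rintro ⟨rfl, -⟩
      simp

lemma starForest_neighborSet_some (i : ι) (j : Fin (ℓ i)) :
    (starForest ℓ).neighborSet ⟨i, some j⟩ = {⟨i, none⟩} := by
  ext ⟨i', _ | j'⟩
  · simp [starForest]
    constructor
    · rintro ⟨-, rfl⟩
      exact ⟨rfl, HEq.rfl⟩
    · rintro ⟨rfl, -⟩
      simp
  · simp [starForest]
    rintro rfl
    simp

lemma starForest_not_adj_none (i i' : ι) :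
    ¬(starForest ℓ).Adj ⟨i, none⟩ ⟨i', none⟩ := by
  simp [starForest]

lemma ncard_neighborSet_starForest_none (i : ι) :
    ((starForest ℓ).neighborSet ⟨i, none⟩).ncard = ℓ i := by
  rw [starForest_neighborSet_none, Set.ncard_range_of_injective, Nat.card_eq_fintype_card,
    Fintype.card_fin]
  intro j j' h
  simpa using h

lemma ncard_neighborSet_starForest_some (i : ι) (j : Fin (ℓ i)) :
    ((starForest ℓ).neighborSet ⟨i, some j⟩).ncard = 1 := by
  rw [starForest_neighborSet_some, Set.ncard_singleton]

end StarForest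

lemma completeBipartiteGraph_eq_bot_of_isEmpty {V W : Type*} [IsEmpty W] :
    completeBipartiteGraph V W = ⊥ := by
  ext (a | a) (b | b) <;> simp <;> exact isEmptyElim ‹W›

/-- The stars `K_{1,d}, …, K_{1,1}` and two isolated vertices, which are the stars with
`d - i = 0` leaves for `i = d, d + 1`. -/
theorem exists_bootRunTime_star_eq {V : Type*} [Fintype V] (d : ℕ)
    (hV : Fintype.card (Σ i : Fin (d + 2), Option (Fin (d - i))) ≤ Fintype.card V) :
    ∃ G : SimpleGraph V,
      bootRunTime (completeBipartiteGraph (Fin 1) (Fin (d + 1))) G = d + 1 := by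
  obtain ⟨e⟩ := Function.Embedding.nonempty_of_card_le hV
  set F := starForest fun i : Fin (d + 2) ↦ d - i
  have centre_inj : Function.Injective fun i : Fin (d + 2) ↦ e ⟨i, none⟩ :=
    fun i i' h ↦ (Sigma.mk.inj_iff.1 (e.injective h)).1
  let a : Fin d ↪ V := ⟨fun j ↦ e ⟨Fin.castLE (Nat.le_add_right d 2) j, none⟩,
    centre_inj.comp (Fin.castLE_injective _)⟩
  have hdeg : ∀ w, ((F.map e).neighborSet (e w)).ncard = (F.neighborSet w).ncard := fun w ↦ by
    rw [neighborSet_map, Set.ncard_image_of_injective _ e.injective]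
  have hcentre : ∀ i : Fin (d + 2), e ⟨i, none⟩ ∈ Set.range a ↔ (i : ℕ) < d := by
    refine fun i ↦ ⟨fun ⟨j, hj⟩ ↦ ?_, fun hi ↦ ⟨⟨i, hi⟩, rfl⟩⟩
    have := congrArg Fin.val (centre_inj hj)
    simp only [Fin.val_castLE] at this
    omega
  have hisol : ∀ i : Fin (d + 2), d ≤ i → (F.map e).IsIsolated (e ⟨i, none⟩) := by
    intro i hi
    rw [← neighborSet_eq_empty, ← Set.ncard_eq_zero, hdeg, ncard_neighborSet_starForest_none]
    omega
  refine ⟨F.map e, bootRunTime_star_eq_succ a (fun j ↦ ?_) (fun i j ↦ ?_) (fun v hv ↦ ?_)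
    (x := e ⟨⟨d, by omega⟩, none⟩) (y := e ⟨⟨d + 1, by omega⟩, none⟩) ?_ ?_ ?_
    (hisol _ le_rfl) (hisol _ (by simp))⟩
  · exact (hdeg _).trans (ncard_neighborSet_starForest_none _ _)
  · exact map_adj_apply.not.2 (starForest_not_adj_none _ _ _)
  · by_cases hve : v ∈ Set.range e
    · obtain ⟨⟨i, _ | j⟩, rfl⟩ := hve
      · have hi : d ≤ (i : ℕ) := not_lt.1 fun hi ↦ hv ((hcentre i).2 hi)
        rw [hdeg, ncard_neighborSet_starForest_none]
        omega
      · rw [hdeg, ncard_neighborSet_starForest_some]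
    · rw [(neighborSet_eq_empty _).2 fun w h ↦ ?_, Set.ncard_empty]
      · exact zero_le_one
      obtain ⟨u, _, _, rfl, _⟩ := (map_adj _ _ _ _).1 h
      exact hve ⟨u, rfl⟩
  · intro h
    simpa using congrArg Fin.val (centre_inj h)
  · exact (hcentre _).not.2 (lt_irrefl d)
  · exact (hcentre _).not.2 (by simp)

theorem stmt_13_general (t : ℕ) :
    ∃ N : ℕ, ∀ n, N ≤ n →
      (∀ G : SimpleGraph (Fin n),
        bootRunTime (completeBipartiteGraph (Fin 1) (Fin (t - 1))) G ≤ t - 1) ∧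
      (∃ G : SimpleGraph (Fin n),
        bootRunTime (completeBipartiteGraph (Fin 1) (Fin (t - 1))) G = t - 1) := by
  rcases Nat.lt_or_ge t 2 with ht | ht
  · refine ⟨0, fun n _ ↦ ?_⟩
    rw [show t - 1 = 0 by omega, completeBipartiteGraph_eq_bot_of_isEmpty]
    exact ⟨fun G ↦ (bootRunTime_bot G).le, ⊥, bootRunTime_bot ⊥⟩
  · obtain ⟨d, rfl⟩ : ∃ d, t = d + 2 := ⟨t - 2, by omega⟩
    refine ⟨Fintype.card (Σ i : Fin (d + 2), Option (Fin (d - i))), fun n hn ↦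
      ⟨fun G ↦ bootRunTime_le _ G (bootProc_star_stable G), ?_⟩⟩
    exact exists_bootRunTime_star_eq d (by simpa using hn)

/-- For the star `K_{1,t-1}` on `t` vertices and all sufficiently large `n`, the maximum
running time of the `K_{1,t-1}`-process on `n`-vertex graphs equals `t - 1`. -/
theorem stmt_13 (t : ℕ) (ht : 1 ≤ t) :
    ∃ N : ℕ, ∀ n, N ≤ n →
      (∀ G : SimpleGraph (Fin n),
        bootRunTime (completeBipartiteGraph (Fin 1) (Fin (t - 1))) G ≤ t - 1) ∧
      (∃ G : SimpleGraph (Fin n),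
        bootRunTime (completeBipartiteGraph (Fin 1) (Fin (t - 1))) G = t - 1) :=
  stmt_13_general t
end
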